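/- arXiv:2511.00980 — 4 statements merged into one kernel-verified Lean document; each statement's English description precedes it below -/
import Mathlib

section
/- For a (p,q)-clan γ (a partial matching on p+q nodes whose unmatched nodes are signed + or −, with #(+) − #(−) = p − q), the length ℓ(γ) := Σ_{(i,j)-matchings} (j − i) − #{crossings of γ} is a nonnegative integer. -/
open scoped Classical
namespace ClanPaper

/-- A `(p,q)`-clan: a partial matching on `n = p+q` linearly ordered nodes,
given by the involution `m` (whose fixed points are the unmatched nodes),
with unmatched nodes signed `+` (`true`) or `-` (`false`), such that
`#(+) - #(-) = p - q`.  Signs at matched nodes are normalized to `false`. -/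
structure Clan (p q : ℕ) where
  m : Fin (p + q) → Fin (p + q)
  invol : ∀ i, m (m i) = i
  sign : Fin (p + q) → Bool
  signMatched : ∀ i, m i ≠ i → sign i = false
  balance :
    (Finset.univ.filter fun i => m i = i ∧ sign i = true).card + q =
      (Finset.univ.filter fun i => m i = i ∧ sign i = false).card + p

namespace Clan

variable {p q : ℕ}

/-- `Σ_{(i,j)-matchings, i<j} (j - i)` for the partial matching given by an
involution `m`. -/
noncomputable def arcSumAux {n : ℕ} (m : Fin n → Fin n) : ℕ :=
  ∑ i ∈ Finset.univ.filter (fun i => i < m i), ((m i : ℕ) - (i : ℕ))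

/-- The number of crossings: pairs of matchings `(i,j)`, `(k,l)` with
`i < k < j < l`. -/
noncomputable def crossingsAux {n : ℕ} (m : Fin n → Fin n) : ℕ :=
  (Finset.univ.filter fun x : Fin n × Fin n =>
    x.1 < m x.1 ∧ x.2 < m x.2 ∧ x.1 < x.2 ∧ x.2 < m x.1 ∧ m x.1 < m x.2).card

/-- `ℓ := Σ_{(i,j)-matchings} (j-i) - #crossings`, at the level of raw data. -/
noncomputable def lenAux {n : ℕ} (m : Fin n → Fin n) : ℤ :=
  (arcSumAux m : ℤ) - (crossingsAux m : ℤ)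

/-- The length `ℓ(γ)` of a clan. -/
noncomputable def len (γ : Clan p q) : ℤ := lenAux γ.m

/-- Node `i` is an unmatched `-` or a left endpoint of a matching
(these get the labels `1,…,q` in the definition of `u_γ`). -/
def IsMinusOrLeft (γ : Clan p q) (i : Fin (p + q)) : Prop :=
  (γ.m i = i ∧ γ.sign i = false) ∨ i < γ.m i

/-- Node `i` is an unmatched `+` or a left endpoint of a matching
(these get the labels `1,…,p` in the definition of `v_γ`). -/
def IsPlusOrLeft (γ : Clan p q) (i : Fin (p + q)) : Prop :=
  (γ.m i = i ∧ γ.sign i = true) ∨ i < γ.m i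

/-- `u_γ` as a `ℕ`-valued labelling (with values in `1,…,n`): the `-`s and the
left endpoints get the labels `1,…,q` from left to right, the `+`s and the
right endpoints get the labels `q+1,…,n` from left to right. -/
noncomputable def uFun (γ : Clan p q) (i : Fin (p + q)) : ℕ :=
  if γ.IsMinusOrLeft i then
    1 + (Finset.univ.filter fun j => γ.IsMinusOrLeft j ∧ j < i).card
  else
    q + 1 + (Finset.univ.filter fun j => ¬ γ.IsMinusOrLeft j ∧ j < i).card

/-- `v_γ` as a `ℕ`-valued labelling (with values in `1,…,n`): the `+`s and the
left endpoints get the labels `1,…,p` from left to right, the `-`s and the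
right endpoints get the labels `p+1,…,n` from left to right. -/
noncomputable def vFun (γ : Clan p q) (i : Fin (p + q)) : ℕ :=
  if γ.IsPlusOrLeft i then
    1 + (Finset.univ.filter fun j => γ.IsPlusOrLeft j ∧ j < i).card
  else
    p + 1 + (Finset.univ.filter fun j => ¬ γ.IsPlusOrLeft j ∧ j < i).card

/-- The transposition of `i` and `i'`, as a function. -/
def swapFun {n : ℕ} (i i' : Fin n) : Fin n → Fin n :=
  fun x => if x = i then i' else if x = i' then i else x

/-- Nodes `i`, `i'` are both unmatched and carry opposite signs. -/
def Opp (γ : Clan p q) (i i' : Fin (p + q)) : Prop :=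
  γ.m i = i ∧ γ.m i' = i' ∧ γ.sign i ≠ γ.sign i'

/-- `HeckeSpec γ i i' γ'` (for `i' = i+1`) says `γ' = s_i * γ` for the `0`-Hecke
action: if nodes `i`, `i'` carry opposite signs, they are replaced by a matching
between them; otherwise the two nodes are swapped if this increases the length,
and nothing happens if not. -/
def HeckeSpec (γ : Clan p q) (i i' : Fin (p + q)) (γ' : Clan p q) : Prop :=
  (γ.Opp i i' ∧
    (∀ x, γ'.m x = if x = i then i' else if x = i' then i else γ.m x) ∧
    (∀ x, γ'.sign x = if x = i ∨ x = i' then false else γ.sign x)) ∨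
  (¬ γ.Opp i i' ∧
    lenAux γ.m < lenAux (swapFun i i' ∘ γ.m ∘ swapFun i i') ∧
    (∀ x, γ'.m x = swapFun i i' (γ.m (swapFun i i' x))) ∧
    (∀ x, γ'.sign x = γ.sign (swapFun i i' x))) ∨
  (¬ γ.Opp i i' ∧
    ¬ lenAux γ.m < lenAux (swapFun i i' ∘ γ.m ∘ swapFun i i') ∧ γ' = γ)

end Clan
end ClanPaper

/-! Each crossing `(i,j), (k,l)` is determined by its first matching `(i,j)` and the node `k`
strictly between `i` and `j`, so at most `j - i - 1` crossings start at the matching `(i,j)`. -/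

namespace ClanPaper.Clan

open Finset

theorem crossingsAux_le_arcSumAux {n : ℕ} (m : Fin n → Fin n) :
    crossingsAux m ≤ arcSumAux m := by
  set S := univ.filter fun i => i < m i
  calc crossingsAux m ≤ #(S.sigma fun i => Ioo i (m i)) := by
        refine card_le_card_of_injOn (fun x => ⟨x.1, x.2⟩) ?_ ?_
        · rintro ⟨i, k⟩ hx
          simp only [coe_filter, mem_univ, true_and, Set.mem_ofPred_eq] at hx
          simp only [coe_sigma, Set.mem_sigma_iff, coe_filter, mem_univ, true_and,
            Set.mem_ofPred_eq, coe_Ioo, Set.mem_Ioo, S]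
          exact ⟨hx.1, hx.2.2.1, hx.2.2.2.1⟩
        · rintro ⟨i, k⟩ - ⟨i', k'⟩ - h
          simpa using h
    _ = ∑ i ∈ S, #(Ioo i (m i)) := card_sigma _ _
    _ ≤ arcSumAux m := sum_le_sum fun i _ => by
        rw [Fin.card_Ioo]
        exact Nat.sub_le _ _

end ClanPaper.Clan

open ClanPaper in
/-- For a `(p,q)`-clan `γ`, the length
`ℓ(γ) = Σ_{(i,j)-matchings} (j-i) - #crossings` is a nonnegative integer. -/
theorem clan_len_nonneg {p q : ℕ} (γ : Clan p q) : 0 ≤ γ.len :=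
  sub_nonneg.mpr (Int.ofNat_le.mpr (Clan.crossingsAux_le_arcSumAux γ.m))
end

section
/- The 0-Hecke operation on clans is well defined and monotone: for a (p,q)-clan γ and 1 ≤ i ≤ n−1, the clan s_i * γ satisfies ℓ(s_i * γ) ≥ ℓ(γ), with equality exactly when s_i * γ = γ. -/
open scoped Classical
namespace ClanPaper
namespace Clan

theorem swapFun_invol {n : ℕ} (i i' x : Fin n) :
    swapFun i i' (swapFun i i' x) = x := by
  unfold swapFun
  by_cases hx : x = i
  · by_cases hi : i' = i <;> simp [hx, hi]
  · by_cases hx' : x = i' <;> simp [hx, hx']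

/-- Key computation for the merge case: replacing two fixed points `i < i' = i+1`
by a matching between them raises `lenAux` by exactly `1`. -/
theorem lenAux_merge {n : ℕ} (m : Fin n → Fin n) (i i' : Fin n)
    (hii : (i' : ℕ) = (i : ℕ) + 1) (hi : m i = i) (hi' : m i' = i') :
    lenAux (fun x => if x = i then i' else if x = i' then i else m x)
      = lenAux m + 1 := by
  set m' : Fin n → Fin n := fun x => if x = i then i' else if x = i' then i else m x with hm'
  have hii' : i' ≠ i := by
    intro e; rw [e] at hii; omega
  have hm'i : m' i = i' := by simp [hm']
  have hm'i' : m' i' = i := by simp [hm', hii']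
  have hm'o : ∀ x, x ≠ i → x ≠ i' → m' x = m x := by
    intro x h1 h2; simp [hm', h1, h2]
  have noBetween : ∀ x : Fin n, i < x → x < i' → False := by
    intro x h1 h2
    rw [Fin.lt_def] at h1 h2; omega
  have hilt : i < i' := by rw [Fin.lt_def]; omega
  have hnotlt : ¬ (i' : Fin n) < i := by rw [Fin.lt_def]; omega
  -- the arc sum goes up by 1
  have hF : (Finset.univ.filter fun x => x < m' x)
      = insert i (Finset.univ.filter fun x => x < m x) := by
    ext x
    simp only [Finset.mem_filter, Finset.mem_insert, Finset.mem_univ, true_and]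
    by_cases hx : x = i
    · subst hx; simp [hm'i, hilt]
    · by_cases hx' : x = i'
      · subst hx'
        rw [hm'i', hi']
        simp [hx, hnotlt]
      · rw [hm'o x hx hx']; simp [hx]
  have hinotin : i ∉ (Finset.univ.filter fun x => x < m x) := by
    simp [hi]
  have harc : arcSumAux m' = arcSumAux m + 1 := by
    unfold arcSumAux
    rw [hF, Finset.sum_insert hinotin, hm'i]
    have hcong : ∀ x ∈ (Finset.univ.filter fun x => x < m x),
        ((m' x : ℕ) - (x : ℕ)) = ((m x : ℕ) - (x : ℕ)) := by
      intro x hx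
      simp only [Finset.mem_filter, Finset.mem_univ, true_and] at hx
      have hxi : x ≠ i := by rintro rfl; rw [hi] at hx; exact absurd hx (lt_irrefl _)
      have hxi' : x ≠ i' := by rintro rfl; rw [hi'] at hx; exact absurd hx (lt_irrefl _)
      rw [hm'o x hxi hxi']
    rw [Finset.sum_congr rfl hcong]
    omega
  -- the number of crossings is unchanged
  have hC : crossingsAux m' = crossingsAux m := by
    unfold crossingsAux
    congr 1
    ext x
    obtain ⟨a, b⟩ := x
    simp only [Finset.mem_filter, Finset.mem_univ, true_and]
    constructor
    · rintro ⟨h1, h2, h3, h4, h5⟩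
      by_cases ha : a = i
      · subst ha; rw [hm'i] at h4
        exact absurd (noBetween b h3 h4) not_false
      · by_cases ha' : a = i'
        · subst ha'; rw [hm'i'] at h1
          exact absurd h1 hnotlt
        · rw [hm'o a ha ha'] at h1 h4 h5
          by_cases hb : b = i
          · subst hb; rw [hm'i] at h5
            exact absurd (noBetween (m a) h4 h5) not_false
          · by_cases hb' : b = i'
            · subst hb'; rw [hm'i'] at h2
              exact absurd h2 hnotlt
            · rw [hm'o b hb hb'] at h2 h5
              exact ⟨h1, h2, h3, h4, h5⟩
    · rintro ⟨h1, h2, h3, h4, h5⟩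
      have ha : a ≠ i := by rintro rfl; rw [hi] at h1; exact absurd h1 (lt_irrefl _)
      have ha' : a ≠ i' := by rintro rfl; rw [hi'] at h1; exact absurd h1 (lt_irrefl _)
      have hb : b ≠ i := by rintro rfl; rw [hi] at h2; exact absurd h2 (lt_irrefl _)
      have hb' : b ≠ i' := by rintro rfl; rw [hi'] at h2; exact absurd h2 (lt_irrefl _)
      rw [hm'o a ha ha', hm'o b hb hb']
      exact ⟨h1, h2, h3, h4, h5⟩
  unfold lenAux
  rw [harc, hC]
  push_cast
  ring

/-- The clan obtained by swapping nodes `i`, `i'`. -/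
noncomputable def swapClan {p q : ℕ} (γ : Clan p q) (i i' : Fin (p + q)) : Clan p q where
  m := fun x => swapFun i i' (γ.m (swapFun i i' x))
  invol := by
    intro x
    rw [swapFun_invol, γ.invol, swapFun_invol]
  sign := fun x => γ.sign (swapFun i i' x)
  signMatched := by
    intro x hx
    apply γ.signMatched
    intro hfix
    exact hx (by rw [hfix, swapFun_invol])
  balance := by
    have key : ∀ b : Bool,
        (Finset.univ.filter fun x =>
            swapFun i i' (γ.m (swapFun i i' x)) = x ∧ γ.sign (swapFun i i' x) = b).card
          = (Finset.univ.filter fun x => γ.m x = x ∧ γ.sign x = b).card := by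
      intro b
      apply Finset.card_bij' (fun x _ => swapFun i i' x) (fun x _ => swapFun i i' x)
      · intro x hx
        simp only [Finset.mem_filter, Finset.mem_univ, true_and] at hx ⊢
        refine ⟨?_, hx.2⟩
        have := hx.1
        calc γ.m (swapFun i i' x)
            = swapFun i i' (swapFun i i' (γ.m (swapFun i i' x))) := (swapFun_invol _ _ _).symm
          _ = swapFun i i' x := by rw [this]
      · intro x hx
        simp only [Finset.mem_filter, Finset.mem_univ, true_and] at hx ⊢
        constructor
        · rw [swapFun_invol, hx.1]
        · rw [swapFun_invol]
          exact hx.2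
      · intro x _; exact swapFun_invol i i' x
      · intro x _; exact swapFun_invol i i' x
    have h1 := key true
    have h2 := key false
    rw [h1, h2]
    exact γ.balance

/-- The clan obtained by matching the oppositely-signed fixed points `i`, `i'`. -/
noncomputable def mergeClan {p q : ℕ} (γ : Clan p q) (i i' : Fin (p + q))
    (hii : (i' : ℕ) = (i : ℕ) + 1) (hopp : γ.Opp i i') : Clan p q where
  m := fun x => if x = i then i' else if x = i' then i else γ.m x
  invol := by
    obtain ⟨hmi, hmi', _⟩ := hopp
    have hii' : i' ≠ i := by intro e; rw [e] at hii; omega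
    intro x
    by_cases hx : x = i
    · subst hx; simp [hii']
    · by_cases hx' : x = i'
      · subst hx'; simp [hii']
      · have h1 : γ.m x ≠ i := by
          intro e
          have hh := γ.invol x
          rw [e, hmi] at hh
          exact hx hh.symm
        have h2 : γ.m x ≠ i' := by
          intro e
          have hh := γ.invol x
          rw [e, hmi'] at hh
          exact hx' hh.symm
        simp [hx, hx', h1, h2, γ.invol]
  sign := fun x => if x = i ∨ x = i' then false else γ.sign x
  signMatched := by
    intro x hx
    by_cases hcase : x = i ∨ x = i'
    · simp [hcase]
    · push_neg at hcase
      simp only [hcase.1, hcase.2, or_self, if_false] at hx ⊢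
      exact γ.signMatched x hx
  balance := by
    obtain ⟨hmi, hmi', hs⟩ := hopp
    have hii' : i' ≠ i := by intro e; rw [e] at hii; omega
    have key : ∀ b : Bool,
        (Finset.univ.filter fun x =>
            (if x = i then i' else if x = i' then i else γ.m x) = x ∧
            (if x = i ∨ x = i' then false else γ.sign x) = b).card
          = (((Finset.univ.filter fun x => γ.m x = x ∧ γ.sign x = b).erase i).erase i').card := by
      intro b
      congr 1
      ext x
      simp only [Finset.mem_filter, Finset.mem_univ, true_and, Finset.mem_erase]
      by_cases hx : x = i
      · subst hx; simp [hii', Ne.symm hii']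
      · by_cases hx' : x = i'
        · subst hx'; simp [hii', hx, Ne.symm hx]
        · simp [hx, hx']
    have hS : ∀ b : Bool, ∀ z : Fin (p + q), γ.m z = z → γ.sign z = b →
        z ∈ Finset.univ.filter fun x => γ.m x = x ∧ γ.sign x = b := by
      intro b z h1 h2
      simp [h1, h2]
    have hbal := γ.balance
    rw [key true, key false]
    cases hb : γ.sign i
    · -- sign i = false, sign i' = true
      have hb' : γ.sign i' = true := by
        rw [hb] at hs
        cases hsb : γ.sign i' with
        | false => rw [hsb] at hs; exact absurd rfl hs
        | true => rfl
      have hmemF : i ∈ Finset.univ.filter fun x => γ.m x = x ∧ γ.sign x = false :=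
        hS false i hmi hb
      have hmemT : i' ∈ Finset.univ.filter fun x => γ.m x = x ∧ γ.sign x = true :=
        hS true i' hmi' hb'
      have hnotT : i ∉ Finset.univ.filter fun x => γ.m x = x ∧ γ.sign x = true := by
        simp [hb]
      have hnotF : i' ∉ Finset.univ.filter fun x => γ.m x = x ∧ γ.sign x = false := by
        simp [hb']
      have hnotF' : i' ∉ (Finset.univ.filter
          fun x => γ.m x = x ∧ γ.sign x = false).erase i :=
        fun hm => hnotF (Finset.mem_erase.mp hm).2
      rw [Finset.erase_eq_of_notMem hnotT, Finset.card_erase_of_mem hmemT,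
        Finset.erase_eq_of_notMem hnotF',
        Finset.card_erase_of_mem hmemF]
      have c1 : 0 < (Finset.univ.filter fun x => γ.m x = x ∧ γ.sign x = true).card :=
        Finset.card_pos.mpr ⟨i', hmemT⟩
      have c2 : 0 < (Finset.univ.filter fun x => γ.m x = x ∧ γ.sign x = false).card :=
        Finset.card_pos.mpr ⟨i, hmemF⟩
      omega
    · -- sign i = true, sign i' = false
      have hb' : γ.sign i' = false := by
        rw [hb] at hs
        cases hsb : γ.sign i' with
        | true => rw [hsb] at hs; exact absurd rfl hs
        | false => rfl
      have hmemT : i ∈ Finset.univ.filter fun x => γ.m x = x ∧ γ.sign x = true :=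
        hS true i hmi hb
      have hmemF : i' ∈ Finset.univ.filter fun x => γ.m x = x ∧ γ.sign x = false :=
        hS false i' hmi' hb'
      have hnotF : i ∉ Finset.univ.filter fun x => γ.m x = x ∧ γ.sign x = false := by
        simp [hb]
      have hnotT : i' ∉ Finset.univ.filter fun x => γ.m x = x ∧ γ.sign x = true := by
        simp [hb']
      have hnotT' : i' ∉ (Finset.univ.filter
          fun x => γ.m x = x ∧ γ.sign x = true).erase i :=
        fun hm => hnotT (Finset.mem_erase.mp hm).2
      rw [Finset.erase_eq_of_notMem hnotF, Finset.card_erase_of_mem hmemF,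
        Finset.erase_eq_of_notMem hnotT',
        Finset.card_erase_of_mem hmemT]
      have c1 : 0 < (Finset.univ.filter fun x => γ.m x = x ∧ γ.sign x = true).card :=
        Finset.card_pos.mpr ⟨i, hmemT⟩
      have c2 : 0 < (Finset.univ.filter fun x => γ.m x = x ∧ γ.sign x = false).card :=
        Finset.card_pos.mpr ⟨i', hmemF⟩
      omega

end Clan
end ClanPaper

open ClanPaper in
/-- The `0`-Hecke operation on clans is well defined (there
exists a clan `γ' = s_i * γ` satisfying the defining case description) and
monotone: `ℓ(s_i * γ) ≥ ℓ(γ)`, with equality exactly when `s_i * γ = γ`. -/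
theorem hecke_exists_and_monotone {p q : ℕ} (γ : Clan p q) (i i' : Fin (p + q))
    (h : (i' : ℕ) = (i : ℕ) + 1) :
    ∃ γ' : Clan p q, Clan.HeckeSpec γ i i' γ' ∧ γ.len ≤ γ'.len ∧
      (γ'.len = γ.len ↔ γ' = γ) := by
  by_cases hopp : γ.Opp i i'
  · -- merge case
    refine ⟨Clan.mergeClan γ i i' h hopp, Or.inl ⟨hopp, fun x => rfl, fun x => rfl⟩, ?_, ?_⟩
    · have hlen : (Clan.mergeClan γ i i' h hopp).len = γ.len + 1 :=
        Clan.lenAux_merge γ.m i i' h hopp.1 hopp.2.1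
      omega
    · have hlen : (Clan.mergeClan γ i i' h hopp).len = γ.len + 1 :=
        Clan.lenAux_merge γ.m i i' h hopp.1 hopp.2.1
      constructor
      · intro he; rw [hlen] at he; omega
      · intro he; rw [he] at hlen; omega
  · by_cases hlt : Clan.lenAux γ.m <
        Clan.lenAux (Clan.swapFun i i' ∘ γ.m ∘ Clan.swapFun i i')
    · -- swap case
      refine ⟨Clan.swapClan γ i i',
        Or.inr (Or.inl ⟨hopp, hlt, fun x => rfl, fun x => rfl⟩), ?_, ?_⟩
      · have hlt' : γ.len < (Clan.swapClan γ i i').len := hlt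
        omega
      · have hlt' : γ.len < (Clan.swapClan γ i i').len := hlt
        constructor
        · intro he; omega
        · intro he; rw [he] at hlt'; exact absurd hlt' (lt_irrefl _)
    · -- identity case
      exact ⟨γ, Or.inr (Or.inr ⟨hopp, hlt, rfl⟩), le_refl _, ⟨fun _ => rfl, fun _ => rfl⟩⟩
end

section
/- For a (p,q)-clan γ and a simple transposition s_i with s_i * γ > γ (i.e. ℓ(s_i*γ) > ℓ(γ)), one has v_{s_i*γ} = min(v_γ, v_γ s_i) in Bruhat order, where v_γ and v_{s_i*γ} are the associated p-inverse Grassmannian permutations. -/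
open scoped Classical
/-! The labelling `v_γ` depends only on the set `S_γ` of nodes that are `+` signs or left
endpoints, and `v_γ(i) < v_γ(i+1)` unless `i ∉ S_γ ∋ i+1`. The step `γ ↦ s_i * γ` either keeps
`S_γ` and puts `i` into it, or replaces `S_γ` by `s_i S_γ`; in both cases `v_{s_i*γ}` is whichever
of `v_γ`, `v_γ s_i` has an ascent at `i`, except when `i ∈ S_γ ∌ i+1` in the second case. That
configuration cannot occur when `s_i * γ > γ`, because swapping `i` and `i+1` there does not
increase the length: it shortens the arcs at `i` and `i+1` by at least one in total and, since it
only changes the relative order of `i` and `i+1`, it destroys at most one crossing. -/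

namespace ClanPaper
open Finset Clan

lemma Clan.swapFun_eq_swap {n : ℕ} (i i' : Fin n) : swapFun i i' = Equiv.swap i i' := by
  funext x
  simp [swapFun, Equiv.swap_apply_def]

lemma comp_swap_eq_self_of_iff {α : Type*} [DecidableEq α] {Q : α → Prop} {a b : α}
    (hab : Q a ↔ Q b) : Q ∘ Equiv.swap a b = Q := by
  funext x
  rw [Function.comp_apply, Equiv.swap_apply_def]
  split_ifs with hxa hxb
  · rw [hxa, propext hab]
  · rw [hxb, propext hab]
  · rfl

section AdjacentSwap

variable {n : ℕ} {i i' : Fin n}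

lemma swap_lt_swap_iff (h : (i' : ℕ) = i + 1) {a b : Fin n}
    (h₁ : ¬(a = i ∧ b = i')) (h₂ : ¬(a = i' ∧ b = i)) :
    Equiv.swap i i' a < Equiv.swap i i' b ↔ a < b := by
  simp only [Equiv.swap_apply_def, Fin.ext_iff] at *
  split_ifs <;> omega

lemma swap_lt_swap_of_lt (h : (i' : ℕ) = i + 1) {a b : Fin n} (hab : a < b)
    (hne : ¬(a = i ∧ b = i')) : Equiv.swap i i' a < Equiv.swap i i' b := by
  refine (swap_lt_swap_iff h hne ?_).2 hab
  rintro ⟨rfl, rfl⟩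
  omega

lemma swap_lt_iff_lt_swap (h : (i' : ℕ) = i + 1) {a b : Fin n} (hab : a ≠ b) :
    Equiv.swap i i' a < b ↔ a < Equiv.swap i i' b := by
  simp only [Equiv.swap_apply_def, Fin.ext_iff] at *
  split_ifs <;> omega

lemma le_swap_apply (h : (i' : ℕ) = i + 1) {a : Fin n} (ha : a ≠ i') : a ≤ Equiv.swap i i' a := by
  simp only [Equiv.swap_apply_def, Fin.ext_iff] at *
  split_ifs <;> omega

lemma swap_apply_le (h : (i' : ℕ) = i + 1) {a : Fin n} (ha : a ≠ i) : Equiv.swap i i' a ≤ a := by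
  simp only [Equiv.swap_apply_def, Fin.ext_iff] at *
  split_ifs <;> omega

end AdjacentSwap

section Labelling

variable {n : ℕ} {i i' : Fin n}

noncomputable def labelling (P : ℕ) (Q : Fin n → Prop) (j : Fin n) : ℕ :=
  if Q j then 1 + #{k | Q k ∧ k < j} else P + 1 + #{k | ¬ Q k ∧ k < j}

lemma card_filter_comp_swap_lt (h : (i' : ℕ) = i + 1) {R : Fin n → Prop} [DecidablePred R]
    {j : Fin n} (hj : Equiv.swap i i' j ≠ j → ¬ R j) :
    #{k | R (Equiv.swap i i' k) ∧ k < j} = #{k | R k ∧ k < Equiv.swap i i' j} := by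
  refine card_equiv (Equiv.swap i i') fun k => ?_
  simp only [mem_filter, mem_univ, true_and]
  refine and_congr_right fun hk => ?_
  by_cases hkj : Equiv.swap i i' k = j
  · subst hkj
    rw [Equiv.swap_apply_self] at hj ⊢
    by_cases hfix : k = Equiv.swap i i' k
    · rw [← hfix]
    · exact absurd hk (hj hfix)
  · simpa using swap_lt_iff_lt_swap h hkj

lemma card_filter_lt_lt_card {R : Fin n → Prop} [DecidablePred R] {a : Fin n} {t : Finset (Fin n)}
    (hsub : ({k | R k ∧ k < a} : Finset (Fin n)) ⊆ t) (hat : a ∈ t) : #{k | R k ∧ k < a} < #t :=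
  card_lt_card ((ssubset_iff_of_subset hsub).2 ⟨a, hat, by simp⟩)

lemma labelling_le (P : ℕ) {Q : Fin n → Prop} (hP : #{k | Q k} ≤ P) {j : Fin n} (hj : Q j) :
    labelling P Q j ≤ P := by
  have := card_filter_lt_lt_card (R := Q) (a := j) (t := {k | Q k})
    (fun k => by simp_all) (by simpa)
  rw [labelling, if_pos hj]
  omega

lemma lt_labelling (P : ℕ) {Q : Fin n → Prop} {j : Fin n} (hj : ¬ Q j) : P < labelling P Q j := by
  rw [labelling, if_neg hj]
  omega

lemma labelling_lt_labelling_iff (h : (i' : ℕ) = i + 1) {P : ℕ} {Q : Fin n → Prop}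
    (hP : #{k | Q k} ≤ P) : labelling P Q i < labelling P Q i' ↔ (Q i' → Q i) := by
  have hii' : i < i' := by omega
  have hsub : ∀ (R : Fin n → Prop) [DecidablePred R],
      ({k | R k ∧ k < i} : Finset (Fin n)) ⊆ ({k | R k ∧ k < i'} : Finset (Fin n)) :=
    fun R _ k hk => by
      simp only [mem_filter, mem_univ, true_and] at hk ⊢
      exact ⟨hk.1, hk.2.trans hii'⟩
  by_cases hi : Q i <;> by_cases hi' : Q i'
  · have := card_filter_lt_lt_card (hsub Q) (by simpa using ⟨hi, hii'⟩)
    refine iff_of_true ?_ fun _ => hi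
    simp only [labelling, if_pos hi, if_pos hi']
    omega
  · have := labelling_le P hP hi
    have := lt_labelling P hi'
    exact iff_of_true (by omega) fun _ => hi
  · have := labelling_le P hP hi'
    have := lt_labelling P hi
    exact iff_of_false (by omega) fun hii => hi (hii hi')
  · have := card_filter_lt_lt_card (hsub fun k => ¬ Q k) (by simpa using ⟨hi, hii'⟩)
    refine iff_of_true ?_ fun hi'' => absurd hi'' hi'
    simp only [labelling, if_neg hi, if_neg hi']
    omega

lemma labelling_comp_swap (h : (i' : ℕ) = i + 1) {P : ℕ} {Q : Fin n → Prop}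
    (hQ : ¬(Q i ↔ Q i')) : labelling P (Q ∘ Equiv.swap i i') = labelling P Q ∘ Equiv.swap i i' := by
  have hmoved : ∀ j, Equiv.swap i i' j ≠ j → (Q (Equiv.swap i i' j) ↔ ¬ Q j) := by
    intro j hj
    rcases (Equiv.swap_apply_ne_self_iff.mp hj).2 with rfl | rfl
    · simp only [Equiv.swap_apply_left]; tauto
    · simp only [Equiv.swap_apply_right]; tauto
  funext j
  simp only [labelling, Function.comp_apply]
  by_cases hj : Q (Equiv.swap i i' j)
  · rw [if_pos hj, if_pos hj, card_filter_comp_swap_lt h fun hfix => (hmoved j hfix).mp hj]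
  · rw [if_neg hj, if_neg hj,
      card_filter_comp_swap_lt (R := fun k => ¬ Q k) h fun hfix hq => hj ((hmoved j hfix).mpr hq)]

lemma labelling_eq_ite_of_eq_or_eq_comp_swap (h : (i' : ℕ) = i + 1) {P : ℕ} {Q Q' : Fin n → Prop}
    (hP : #{k | Q k} ≤ P) (hQ' : Q' = Q ∨ Q' = Q ∘ Equiv.swap i i') (hasc : Q' i' → Q' i)
    (j : Fin n) :
    labelling P Q' j = if labelling P Q i < labelling P Q i' then labelling P Q j
      else labelling P Q (Equiv.swap i i' j) := by
  rcases hQ' with rfl | rfl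
  · rw [if_pos ((labelling_lt_labelling_iff h hP).2 hasc)]
  by_cases hQ : Q i ↔ Q i'
  · rw [comp_swap_eq_self_of_iff hQ] at hasc ⊢
    rw [if_pos ((labelling_lt_labelling_iff h hP).2 hasc)]
  · simp only [Function.comp_apply, Equiv.swap_apply_left, Equiv.swap_apply_right] at hasc
    rw [if_neg fun hlt => hQ ⟨hasc, (labelling_lt_labelling_iff h hP).1 hlt⟩,
      labelling_comp_swap h hQ, Function.comp_apply]

end Labelling

section Involution

variable {n : ℕ} {m : Fin n → Fin n} {i i' : Fin n}

lemma conj_swap_eq_self (hm : ∀ x, m (m x) = x) (hii' : m i = i ∧ m i' = i' ∨ m i = i') :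
    Equiv.swap i i' ∘ m ∘ Equiv.swap i i' = m := by
  have hm' : m i' = i' ∨ m i' = i := by
    rcases hii' with ⟨-, h'⟩ | h'
    · exact Or.inl h'
    · exact Or.inr (by rw [← h', hm])
  funext x
  simp only [Function.comp_apply, Equiv.swap_apply_def]
  split_ifs <;> grind

lemma arcSumAux_eq_sum_ite (m : Fin n → Fin n) :
    arcSumAux m = ∑ x, if x < m x then (m x : ℕ) - x else 0 :=
  sum_filter _ _

lemma arcSumAux_conj_swap_lt (hm : ∀ x, m (m x) = x) (h : (i' : ℕ) = i + 1)
    (hi : ¬ m i < i) (hi' : ¬ i' < m i') (hii' : m i ≠ i') (hmove : ¬(m i = i ∧ m i' = i')) :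
    arcSumAux (Equiv.swap i i' ∘ m ∘ Equiv.swap i i') < arcSumAux m := by
  have hi'i : m i' ≠ i := fun e => hii' (by rw [← e, hm])
  have hlt_iff : ∀ y, Equiv.swap i i' y < Equiv.swap i i' (m y) ↔ y < m y := fun y =>
    swap_lt_swap_iff h (fun ⟨hy, e⟩ => hii' (hy ▸ e)) (fun ⟨hy, e⟩ => hi'i (hy ▸ e))
  have hshrink : ∀ y, y < m y →
      (Equiv.swap i i' (m y) : ℕ) - Equiv.swap i i' y ≤ (m y : ℕ) - y := fun y hy => by
    have h₁ := le_swap_apply h (a := y) (by rintro rfl; exact hi' hy)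
    have h₂ := swap_apply_le h (a := m y) (fun e => hi (by rwa [← e, hm]))
    omega
  rw [arcSumAux_eq_sum_ite, arcSumAux_eq_sum_ite, ← Equiv.sum_comp (Equiv.swap i i')]
  simp only [Function.comp_apply, Equiv.swap_apply_self, hlt_iff]
  refine sum_lt_sum (fun y _ => ?_) ?_
  · split_ifs with hy
    exacts [hshrink y hy, le_rfl]
  · by_cases hfix : m i = i
    · have hfix' : m i' ≠ i' := fun e => hmove ⟨hfix, e⟩
      have hy : m i' < m (m i') := by rw [hm]; exact lt_of_le_of_ne (not_lt.1 hi') hfix'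
      refine ⟨m i', mem_univ _, ?_⟩
      have := le_swap_apply h hfix'
      rw [if_pos hy, if_pos hy, hm, Equiv.swap_apply_right]
      rw [hm] at hy
      omega
    · have hy : i < m i := lt_of_le_of_ne (not_lt.1 hi) (Ne.symm hfix)
      refine ⟨i, mem_univ _, ?_⟩
      have := swap_apply_le h hfix
      rw [if_pos hy, if_pos hy, Equiv.swap_apply_left]
      omega

-- An `abbrev`, so that `IsCrossing m x y` is decided by the instance used in `crossingsAux`.
abbrev IsCrossing (m : Fin n → Fin n) (x y : Fin n) : Prop :=
  x < m x ∧ y < m y ∧ x < y ∧ y < m x ∧ m x < m y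

lemma crossingsAux_eq_card (m : Fin n → Fin n) :
    crossingsAux m = #{c : Fin n × Fin n | IsCrossing m c.1 c.2} := rfl

lemma isCrossing_conj_swap (hm : ∀ x, m (m x) = x) (h : (i' : ℕ) = i + 1)
    (hi : ¬ m i < i) (hi' : ¬ i' < m i') (hii' : m i ≠ i') {x y : Fin n}
    (hxy : IsCrossing m x y) (hne : (x, y) ≠ (m i', i)) :
    IsCrossing (Equiv.swap i i' ∘ m ∘ Equiv.swap i i') (Equiv.swap i i' x) (Equiv.swap i i' y) := by
  obtain ⟨h₁, h₂, h₃, h₄, h₅⟩ := hxy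
  simp only [IsCrossing, Function.comp_apply, Equiv.swap_apply_self]
  refine ⟨swap_lt_swap_of_lt h h₁ ?_, swap_lt_swap_of_lt h h₂ ?_, swap_lt_swap_of_lt h h₃ ?_,
    swap_lt_swap_of_lt h h₄ ?_, swap_lt_swap_of_lt h h₅ ?_⟩
  · rintro ⟨rfl, e⟩; exact hii' e
  · rintro ⟨rfl, e⟩; exact hii' e
  · rintro ⟨-, rfl⟩; exact hi' h₂
  · rintro ⟨rfl, e⟩; exact hne (by rw [← e, hm])
  · rintro ⟨e, -⟩; exact hi (by rw [← e, hm]; exact h₁)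

lemma crossingsAux_le_conj_swap_add_one (hm : ∀ x, m (m x) = x) (h : (i' : ℕ) = i + 1)
    (hi : ¬ m i < i) (hi' : ¬ i' < m i') (hii' : m i ≠ i') :
    crossingsAux m ≤ crossingsAux (Equiv.swap i i' ∘ m ∘ Equiv.swap i i') + 1 := by
  set m' := Equiv.swap i i' ∘ m ∘ Equiv.swap i i'
  let e := Equiv.prodCongr (Equiv.swap i i') (Equiv.swap i i')
  calc crossingsAux m
      ≤ #(insert (m i', i) ({c | IsCrossing m' (e c).1 (e c).2} : Finset (Fin n × Fin n))) := by
        refine card_le_card fun c hc => ?_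
        simp only [mem_filter, mem_univ, true_and] at hc
        by_cases hne : c = (m i', i)
        · exact hne ▸ mem_insert_self _ _
        · exact mem_insert_of_mem
            (mem_filter.2 ⟨mem_univ _, isCrossing_conj_swap hm h hi hi' hii' hc hne⟩)
    _ ≤ #{c | IsCrossing m' (e c).1 (e c).2} + 1 := card_insert_le _ _
    _ = crossingsAux m' + 1 := by
        rw [crossingsAux_eq_card]
        congr 1
        exact card_equiv e (by simp)

lemma lenAux_conj_swap_le (hm : ∀ x, m (m x) = x) (h : (i' : ℕ) = i + 1)
    (hi : ¬ m i < i) (hi' : ¬ i' < m i') (hii' : m i ≠ i') :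
    lenAux (Equiv.swap i i' ∘ m ∘ Equiv.swap i i') ≤ lenAux m := by
  by_cases hmove : m i = i ∧ m i' = i'
  · rw [conj_swap_eq_self hm (Or.inl hmove)]
  · have := arcSumAux_conj_swap_lt hm h hi hi' hii' hmove
    have := crossingsAux_le_conj_swap_add_one hm h hi hi' hii'
    unfold lenAux
    omega

end Involution

namespace Clan

variable {p q : ℕ} {γ γ' : Clan p q} {i i' : Fin (p + q)}

lemma card_isPlusOrLeft (γ : Clan p q) : #{x | γ.IsPlusOrLeft x} = p := by
  have hLR : #{x | x < γ.m x} = #{x | γ.m x < x} :=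
    card_equiv ⟨γ.m, γ.m, γ.invol, γ.invol⟩ fun x => by simp [γ.invol]
  have hpt : ∀ x, 2 * (if γ.IsPlusOrLeft x then 1 else 0)
      + (if γ.m x = x ∧ γ.sign x = false then 1 else 0) + (if γ.m x < x then 1 else 0)
      = 1 + (if γ.m x = x ∧ γ.sign x = true then 1 else 0) + (if x < γ.m x then 1 else 0) := by
    intro x
    unfold IsPlusOrLeft
    rcases lt_trichotomy (γ.m x) x with hx | hx | hx
    · simp [hx, hx.not_gt, hx.ne]
    · cases γ.sign x <;> simp [hx]
    · simp [hx, hx.not_gt, hx.ne']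
  have hsum := sum_congr rfl fun x (_ : x ∈ univ) => hpt x
  simp only [sum_add_distrib, ← mul_sum, ← card_filter, sum_const, card_univ, Fintype.card_fin,
    smul_eq_mul, mul_one] at hsum
  have hbal := γ.balance
  omega

lemma vFun_eq_labelling (γ : Clan p q) (j : Fin (p + q)) :
    γ.vFun j = labelling p γ.IsPlusOrLeft j := rfl

lemma IsPlusOrLeft.le_m {x : Fin (p + q)} (hx : γ.IsPlusOrLeft x) : x ≤ γ.m x := by
  rcases hx with ⟨hfix, -⟩ | hlt
  exacts [hfix.ge, hlt.le]

lemma isPlusOrLeft_of_opp (h : (i' : ℕ) = i + 1) (hopp : γ.Opp i i')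
    (hm : ∀ x, γ'.m x = if x = i then i' else if x = i' then i else γ.m x)
    (hsign : ∀ x, γ'.sign x = if x = i ∨ x = i' then false else γ.sign x) :
    (γ'.IsPlusOrLeft = γ.IsPlusOrLeft ∨ γ'.IsPlusOrLeft = γ.IsPlusOrLeft ∘ Equiv.swap i i') ∧
      γ'.IsPlusOrLeft i := by
  obtain ⟨hfi, hfi', hsgn⟩ := hopp
  have hii' : i < i' := by omega
  refine ⟨?_, Or.inr (by rw [hm, if_pos rfl]; exact hii')⟩
  cases hs : γ.sign i
  · right
    funext x
    simp only [IsPlusOrLeft, hm, hsign, Function.comp_apply, Equiv.swap_apply_def]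
    split_ifs <;> grind
  · left
    funext x
    simp only [IsPlusOrLeft, hm, hsign]
    split_ifs <;> grind

lemma isPlusOrLeft_of_conj_swap (h : (i' : ℕ) = i + 1) (hii' : γ.m i ≠ i')
    (hm : ∀ x, γ'.m x = swapFun i i' (γ.m (swapFun i i' x)))
    (hsign : ∀ x, γ'.sign x = γ.sign (swapFun i i' x)) :
    γ'.IsPlusOrLeft = γ.IsPlusOrLeft ∘ Equiv.swap i i' := by
  have hi'i : γ.m i' ≠ i := fun e => hii' (by rw [← e, γ.invol])
  funext x
  simp only [IsPlusOrLeft, hm, hsign, swapFun_eq_swap, Function.comp_apply,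
    Equiv.swap_apply_eq_iff]
  set y := Equiv.swap i i' x
  have hx : x = Equiv.swap i i' y := (Equiv.swap_apply_self _ _ _).symm
  rw [hx, swap_lt_swap_iff h (fun ⟨hy, e⟩ => hii' (hy ▸ e)) (fun ⟨hy, e⟩ => hi'i (hy ▸ e))]

lemma isPlusOrLeft_of_heckeSpec (h : (i' : ℕ) = i + 1) (hs : HeckeSpec γ i i' γ')
    (hlt : γ.len < γ'.len) :
    (γ'.IsPlusOrLeft = γ.IsPlusOrLeft ∨ γ'.IsPlusOrLeft = γ.IsPlusOrLeft ∘ Equiv.swap i i') ∧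
      (γ'.IsPlusOrLeft i' → γ'.IsPlusOrLeft i) := by
  rcases hs with ⟨hopp, hm, hsign⟩ | ⟨-, hlen, hm, hsign⟩ | ⟨-, -, rfl⟩
  · exact (isPlusOrLeft_of_opp h hopp hm hsign).imp_right fun hi _ => hi
  · rw [swapFun_eq_swap] at hlen
    have hii' : γ.m i ≠ i' := fun e => (conj_swap_eq_self γ.invol (Or.inr e) ▸ hlen).false
    have hQ' := isPlusOrLeft_of_conj_swap h hii' hm hsign
    refine ⟨Or.inr hQ', ?_⟩
    simp only [hQ', Function.comp_apply, Equiv.swap_apply_left, Equiv.swap_apply_right]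
    intro hi
    by_contra hi'
    exact hlen.not_ge (lenAux_conj_swap_le γ.invol h (not_lt.2 hi.le_m)
      (fun hlt' => hi' (Or.inr hlt')) hii')
  · exact absurd hlt (lt_irrefl _)

end Clan

end ClanPaper

open ClanPaper in
/-- Since `v_γ` and `v_γ s_i` differ by a simple transposition on the right, the Bruhat-smaller
of the two is `v_γ` itself when `v_γ(i) < v_γ(i+1)`, and `v_γ ∘ s_i` otherwise. -/
theorem vFun_hecke_min {p q : ℕ} (γ γ' : Clan p q) (i i' : Fin (p + q))
    (h : (i' : ℕ) = (i : ℕ) + 1) (hs : Clan.HeckeSpec γ i i' γ')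
    (hlt : γ.len < γ'.len) :
    ∀ j : Fin (p + q), γ'.vFun j =
      if γ.vFun i < γ.vFun i' then γ.vFun j
      else γ.vFun (Clan.swapFun i i' j) := by
  obtain ⟨hQ', hasc⟩ := Clan.isPlusOrLeft_of_heckeSpec h hs hlt
  intro j
  simp only [Clan.vFun_eq_labelling, Clan.swapFun_eq_swap]
  exact labelling_eq_ite_of_eq_or_eq_comp_swap h (Clan.card_isPlusOrLeft γ).le hQ' hasc j
end

section
/- Let w₁, w₂ ∈ S_n be q-inverse Grassmannian permutations (inverses have unique descent at q, if any). Then w₁ ≤ w₂ in Bruhat order if and only if #(w₁({1,…,i}) ∩ {1,…,q}) ≥ #(w₂({1,…,i}) ∩ {1,…,q}) for every i ∈ {1,…,n}. -/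
open scoped Classical

namespace ClanPaper

/-- The Bruhat order on `Sₙ`, via Ehresmann's rank (tableau) criterion:
`u ≤ w` iff for all `a`, `b` the number of `x < a` with `w(x) < b` is at most
the number of `x < a` with `u(x) < b`. -/
def BruhatLE {n : ℕ} (u w : Equiv.Perm (Fin n)) : Prop :=
  ∀ a b : ℕ,
    (Finset.univ.filter fun x : Fin n => (x : ℕ) < a ∧ (w x : ℕ) < b).card ≤
    (Finset.univ.filter fun x : Fin n => (x : ℕ) < a ∧ (u x : ℕ) < b).card

/-- `w` is `q`-inverse Grassmannian: `w⁻¹` is increasing on positions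
`1,…,q` and on positions `q+1,…,n`, i.e. its only possible descent is at
position `q`. -/
def IsQInvGrassmannian {n : ℕ} (q : ℕ) (w : Equiv.Perm (Fin n)) : Prop :=
  ∀ a b : Fin n, a < b → ((b : ℕ) < q ∨ q ≤ (a : ℕ)) → w.symm a < w.symm b

/-- A downward-closed finset of naturals bounded below by `lo` is an interval. -/
lemma ico_of_downclosed (S : Finset ℕ) (lo : ℕ) (h1 : ∀ v ∈ S, lo ≤ v)
    (h2 : ∀ v ∈ S, ∀ u, lo ≤ u → u < v → u ∈ S) :
    S = Finset.Ico lo (lo + S.card) := by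
  ext v
  simp only [Finset.mem_Ico]
  constructor
  · intro hv
    refine ⟨h1 v hv, ?_⟩
    have hsub : Finset.Ico lo (v + 1) ⊆ S := by
      intro u hu
      simp only [Finset.mem_Ico, Nat.lt_succ_iff] at hu
      rcases eq_or_lt_of_le hu.2 with h | h
      · exact h ▸ hv
      · exact h2 v hv u hu.1 h
    have := Finset.card_le_card hsub
    rw [Nat.card_Ico] at this
    omega
  · rintro ⟨hlo, hv⟩
    by_contra hvs
    have hsub : S ⊆ Finset.Ico lo v := by
      intro u hu
      simp only [Finset.mem_Ico]
      refine ⟨h1 u hu, ?_⟩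
      by_contra h
      push_neg at h
      rcases eq_or_lt_of_le h with h' | h'
      · exact hvs (h' ▸ hu)
      · exact hvs (h2 u hu v hlo h')
    have := Finset.card_le_card hsub
    rw [Nat.card_Ico] at this
    omega

lemma key {n q : ℕ} (w : Equiv.Perm (Fin n)) (hw : IsQInvGrassmannian q w) (a b : ℕ) :
    (Finset.univ.filter fun x : Fin n => (x : ℕ) < a ∧ (w x : ℕ) < q).card ≤ q ∧
    (Finset.univ.filter fun x : Fin n => (x : ℕ) < a ∧ (w x : ℕ) < q).card ≤
      (Finset.univ.filter fun x : Fin n => (x : ℕ) < a).card ∧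
    (Finset.univ.filter fun x : Fin n => (x : ℕ) < a ∧ (w x : ℕ) < b).card =
      min (Finset.univ.filter fun x : Fin n => (x : ℕ) < a ∧ (w x : ℕ) < q).card b +
      (min (q + ((Finset.univ.filter fun x : Fin n => (x : ℕ) < a).card -
        (Finset.univ.filter fun x : Fin n => (x : ℕ) < a ∧ (w x : ℕ) < q).card)) b - q) := by
  set A : Finset (Fin n) := Finset.univ.filter fun v : Fin n => (w.symm v : ℕ) < a with hA
  -- reindex positions by values
  have hbij : ∀ b : ℕ,
      (Finset.univ.filter fun x : Fin n => (x : ℕ) < a ∧ (w x : ℕ) < b).card =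
      (A.filter fun v : Fin n => (v : ℕ) < b).card := by
    intro b
    apply Finset.card_bij' (fun x _ => w x) (fun v _ => w.symm v)
    · intro x hx
      simp only [Finset.mem_filter, Finset.mem_univ, true_and, hA,
        Equiv.symm_apply_apply] at hx ⊢
      exact ⟨hx.1, hx.2⟩
    · intro v hv
      simp only [Finset.mem_filter, Finset.mem_univ, true_and, hA] at hv ⊢
      exact ⟨hv.1, by simpa using hv.2⟩
    · intro x _; simp
    · intro v _; simp
  have hm : (Finset.univ.filter fun x : Fin n => (x : ℕ) < a).card = A.card := by
    apply Finset.card_bij' (fun x _ => w x) (fun v _ => w.symm v)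
    · intro x hx
      simp only [Finset.mem_filter, Finset.mem_univ, true_and, hA] at hx ⊢
      simpa using hx
    · intro v hv
      simp only [Finset.mem_filter, Finset.mem_univ, true_and, hA] at hv ⊢
      exact hv
    · intro x _; simp
    · intro v _; simp
  -- pass to naturals
  set A' : Finset ℕ := A.image (fun v : Fin n => (v : ℕ)) with hA'
  have hinj : Set.InjOn (fun v : Fin n => (v : ℕ)) A := fun x _ y _ h => Fin.val_injective h
  have hcardA' : A'.card = A.card := Finset.card_image_of_injOn hinj
  have hfilt : ∀ b : ℕ, (A.filter fun v : Fin n => (v : ℕ) < b).card =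
      (A'.filter fun v => v < b).card := by
    intro b
    rw [hA', Finset.filter_image]
    exact (Finset.card_image_of_injOn (hinj.mono (Finset.filter_subset _ _))).symm
  -- membership in A'
  have hmemA' : ∀ v : ℕ, v ∈ A' ↔ ∃ hv : v < n, (w.symm ⟨v, hv⟩ : ℕ) < a := by
    intro v
    simp only [hA', Finset.mem_image, hA, Finset.mem_filter, Finset.mem_univ, true_and]
    constructor
    · rintro ⟨v₀, h, rfl⟩; exact ⟨v₀.2, by simpa using h⟩
    · rintro ⟨hv, h⟩; exact ⟨⟨v, hv⟩, h, rfl⟩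
  set S : Finset ℕ := A'.filter (fun v => v < q) with hS
  set T : Finset ℕ := A'.filter (fun v => ¬ v < q) with hT
  have hST : S.card + T.card = A'.card := Finset.card_filter_add_card_filter_not _
  have hSico : S = Finset.Ico 0 (0 + S.card) := by
    apply ico_of_downclosed
    · intro v _; exact Nat.zero_le v
    · intro v hv u _ huv
      simp only [hS, Finset.mem_filter] at hv ⊢
      obtain ⟨hvA, hvq⟩ := hv
      rw [hmemA'] at hvA
      obtain ⟨hvn, hva⟩ := hvA
      have hun : u < n := lt_trans huv hvn
      refine ⟨(hmemA' u).mpr ⟨hun, ?_⟩, lt_trans huv hvq⟩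
      have := hw ⟨u, hun⟩ ⟨v, hvn⟩ (by simpa [Fin.lt_def] using huv) (Or.inl hvq)
      calc (w.symm ⟨u, hun⟩ : ℕ) ≤ (w.symm ⟨v, hvn⟩ : ℕ) := le_of_lt this
        _ < a := hva
  have hTico : T = Finset.Ico q (q + T.card) := by
    apply ico_of_downclosed
    · intro v hv; simp only [hT, Finset.mem_filter] at hv; omega
    · intro v hv u hqu huv
      simp only [hT, Finset.mem_filter] at hv ⊢
      obtain ⟨hvA, hvq⟩ := hv
      rw [hmemA'] at hvA
      obtain ⟨hvn, hva⟩ := hvA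
      have hun : u < n := lt_trans huv hvn
      refine ⟨(hmemA' u).mpr ⟨hun, ?_⟩, by omega⟩
      have := hw ⟨u, hun⟩ ⟨v, hvn⟩ (by simpa [Fin.lt_def] using huv) (Or.inr hqu)
      calc (w.symm ⟨u, hun⟩ : ℕ) ≤ (w.symm ⟨v, hvn⟩ : ℕ) := le_of_lt this
        _ < a := hva
  have hSq : S.card ≤ q := by
    have : S ⊆ Finset.range q := by
      intro v hv; simp only [hS, Finset.mem_filter] at hv; simpa using hv.2
    simpa using Finset.card_le_card this
  -- c equals card S
  have hc : (Finset.univ.filter fun x : Fin n => (x : ℕ) < a ∧ (w x : ℕ) < q).card = S.card := by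
    rw [hbij q, hfilt q]
  have hmc : (Finset.univ.filter fun x : Fin n => (x : ℕ) < a).card = S.card + T.card := by
    rw [hm, ← hcardA', hST]
  refine ⟨by rw [hc]; exact hSq, by rw [hc, hmc]; omega, ?_⟩
  rw [hbij b, hfilt b, hc, hmc]
  have hsplit : (A'.filter fun v => v < b).card =
      (S.filter fun v => v < b).card + (T.filter fun v => v < b).card := by
    rw [hS, hT, Finset.filter_filter, Finset.filter_filter]
    have e1 : (A'.filter fun v => v < q ∧ v < b) = (A'.filter fun v => v < b).filter (fun v => v < q) := by
      rw [Finset.filter_filter]; apply Finset.filter_congr; intro v _; tauto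
    have e2 : (A'.filter fun v => ¬ v < q ∧ v < b) = (A'.filter fun v => v < b).filter (fun v => ¬ v < q) := by
      rw [Finset.filter_filter]; apply Finset.filter_congr; intro v _; tauto
    rw [e1, e2, Finset.card_filter_add_card_filter_not]
  rw [hsplit]
  have hScard : (S.filter fun v => v < b).card = min S.card b := by
    conv_lhs => rw [hSico]
    rw [Finset.Ico_filter_lt, Nat.card_Ico]; omega
  have hTcard : (T.filter fun v => v < b).card = min (q + T.card) b - q := by
    conv_lhs => rw [hTico]
    rw [Finset.Ico_filter_lt, Nat.card_Ico]
  rw [hScard, hTcard]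
  have : S.card + T.card - S.card = T.card := by omega
  rw [this]

end ClanPaper

open ClanPaper in
/-- Let `w₁, w₂ ∈ Sₙ` be `q`-inverse Grassmannian
permutations.  Then `w₁ ≤ w₂` in Bruhat order if and only if
`#(w₁({1,…,a}) ∩ {1,…,q}) ≥ #(w₂({1,…,a}) ∩ {1,…,q})` for every `a`. -/
theorem inverse_grassmannian_bruhat_criterion {n q : ℕ}
    (w₁ w₂ : Equiv.Perm (Fin n))
    (h₁ : IsQInvGrassmannian q w₁) (h₂ : IsQInvGrassmannian q w₂) :
    BruhatLE w₁ w₂ ↔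
      ∀ a : ℕ,
        (Finset.univ.filter fun x : Fin n => (x : ℕ) < a ∧ (w₂ x : ℕ) < q).card ≤
        (Finset.univ.filter fun x : Fin n => (x : ℕ) < a ∧ (w₁ x : ℕ) < q).card := by
  constructor
  · intro h a
    exact h a q
  · intro h a b
    obtain ⟨hq1, hm1, he1⟩ := ClanPaper.key w₁ h₁ a b
    obtain ⟨hq2, hm2, he2⟩ := ClanPaper.key w₂ h₂ a b
    have hc := h a
    rw [he1, he2]
    omega
end
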